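/- Fix α ∈ (0,1), ν > 0 and L̂ ≥ L > 0. Let P be symmetric positive definite and K₀ a matrix such that Ψ + Γᵀ M(L̂) Γ ⪯ 0, and let ξ₁, …, ξ_{n_c} ∈ ℝ^{n_u} satisfy ξᵢᵀ K₀ P⁻¹ K₀ᵀ ξᵢ ≤ 1 for every i = 1, …, n_c. Then for every initial state x₀ in the ellipsoid E_P = {x : xᵀ P x ≤ 1}, the trajectory of the closed-loop system x_{t+1} = (A + B K₀) x_t + G φ(C_q x_t) satisfies: (a) x_t ∈ E_P for all t ∈ ℕ; (b) ‖x_t‖ ≤ √(λ_max(P)/λ_min(P)) · αᵗ · ‖x₀‖ for all t ∈ ℕ, so x = 0 is locally exponentially stable with decay rate α and domain of attraction E_P; and (c) the control inputs u_t = K₀ x_t satisfy the constraints ξᵢᵀ u_t ≤ 1 for all t ∈ ℕ and all i = 1, …, n_c. (Theorem 7.) -/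

import Mathlib

/-!
Along a trajectory, `V x = xᵀ P x` contracts by `α²` per step. Evaluating the LMI at
`(x_t, φ (C_q x_t))` gives `V x_{t+1} - α² V x_t ≤ -ν⁻¹ (L̂² ‖C_q x_t‖² - ‖φ (C_q x_t)‖²)`, and the
right side is `≤ 0` because `φ (0) = 0` and the Lipschitz bound put `φ` in the sector of slope
`L ≤ L̂` (S-procedure). Hence `V x_t ≤ α^{2t} V x₀ ≤ 1`, so `E_P` is invariant, and the Rayleigh
bounds `λ_min ‖x‖² ≤ V x ≤ λ_max ‖x‖²` turn the decay of `V` into the exponential estimate. The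
input constraints follow from Cauchy–Schwarz for the inner product `⟨v, x⟩_P = vᵀ P x`:
`ξᵀ K₀ x = ⟨P⁻¹ K₀ᵀ ξ, x⟩_P` and `‖P⁻¹ K₀ᵀ ξ‖_P² = ξᵀ K₀ P⁻¹ K₀ᵀ ξ ≤ 1`.
-/

open Matrix

/-- The Euclidean norm of a vector in `ℝ^k`. -/
noncomputable def eNorm {k : ℕ} (x : Fin k → ℝ) : ℝ := Real.sqrt (x ⬝ᵥ x)

section QuadraticForms

variable {m n p : Type*} [Fintype m] [Fintype n] [Fintype p]

lemma dotProduct_transpose_mul_mul_mulVec (M : Matrix m n ℝ) (P : Matrix m m ℝ)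
    (N : Matrix m p ℝ) (a : n → ℝ) (b : p → ℝ) :
    a ⬝ᵥ (Mᵀ * P * N) *ᵥ b = (M *ᵥ a) ⬝ᵥ P *ᵥ (N *ᵥ b) := by
  rw [← mulVec_mulVec, ← mulVec_mulVec, dotProduct_mulVec, vecMul_transpose]

lemma sumElim_dotProduct_fromBlocks_mulVec_sumElim (M₁₁ : Matrix m m ℝ) (M₁₂ : Matrix m n ℝ)
    (M₂₁ : Matrix n m ℝ) (M₂₂ : Matrix n n ℝ) (u : m → ℝ) (v : n → ℝ) :
    Sum.elim u v ⬝ᵥ fromBlocks M₁₁ M₁₂ M₂₁ M₂₂ *ᵥ Sum.elim u v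
      = u ⬝ᵥ M₁₁ *ᵥ u + u ⬝ᵥ M₁₂ *ᵥ v + v ⬝ᵥ M₂₁ *ᵥ u + v ⬝ᵥ M₂₂ *ᵥ v := by
  simp only [fromBlocks_mulVec, sumElim_dotProduct_sumElim, dotProduct_add, Sum.elim_comp_inl,
    Sum.elim_comp_inr]
  ring

lemma Matrix.PosSemidef.sq_dotProduct_mulVec_le [DecidableEq n] {P : Matrix n n ℝ}
    (hP : P.PosSemidef) (a b : n → ℝ) :
    (a ⬝ᵥ P *ᵥ b) ^ 2 ≤ (a ⬝ᵥ P *ᵥ a) * (b ⬝ᵥ P *ᵥ b) := by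
  have hsymm : b ⬝ᵥ P *ᵥ a = a ⬝ᵥ P *ᵥ b := by
    rw [dotProduct_mulVec, ← mulVec_transpose, ← conjTranspose_eq_transpose_of_trivial, hP.1.eq,
      dotProduct_comm]
  -- `s ↦ (a + s b)ᵀ P (a + s b)` is a nonnegative quadratic, so its discriminant is `≤ 0`
  have hquad : ∀ s : ℝ,
      0 ≤ (b ⬝ᵥ P *ᵥ b) * (s * s) + 2 * (a ⬝ᵥ P *ᵥ b) * s + a ⬝ᵥ P *ᵥ a := by
    intro s
    have h := hP.dotProduct_mulVec_nonneg (a + s • b)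
    simp only [star_trivial, mulVec_add, mulVec_smul, dotProduct_add, add_dotProduct,
      dotProduct_smul, smul_dotProduct, smul_eq_mul, hsymm] at h
    linarith
  have hdisc := discrim_le_zero hquad
  rw [discrim] at hdisc
  linarith

lemma Matrix.PosDef.sq_dotProduct_mulVec_le [DecidableEq n] {P : Matrix n n ℝ} (hP : P.PosDef)
    (K : Matrix m n ℝ) (ξ : m → ℝ) (x : n → ℝ) :
    (ξ ⬝ᵥ K *ᵥ x) ^ 2 ≤ (ξ ⬝ᵥ (K * P⁻¹ * Kᵀ) *ᵥ ξ) * (x ⬝ᵥ P *ᵥ x) := by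
  set v := P⁻¹ *ᵥ (Kᵀ *ᵥ ξ)
  have hPv : P *ᵥ v = Kᵀ *ᵥ ξ := by
    rw [mulVec_mulVec, mul_nonsing_inv P (isUnit_iff_ne_zero.mpr hP.det_pos.ne'), one_mulVec]
  have hvP : ∀ y, v ⬝ᵥ P *ᵥ y = ξ ⬝ᵥ K *ᵥ y := fun y => by
    rw [dotProduct_mulVec, ← mulVec_transpose, ← conjTranspose_eq_transpose_of_trivial, hP.1.eq,
      hPv, mulVec_transpose, dotProduct_mulVec]
  have hvv : v ⬝ᵥ P *ᵥ v = ξ ⬝ᵥ (K * P⁻¹ * Kᵀ) *ᵥ ξ := by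
    rw [hvP, ← mulVec_mulVec, ← mulVec_mulVec]
  rw [← hvP, ← hvv]
  exact hP.posSemidef.sq_dotProduct_mulVec_le v x

lemma Matrix.PosDef.dotProduct_mulVec_le_one [DecidableEq n] {P : Matrix n n ℝ} (hP : P.PosDef)
    (K : Matrix m n ℝ) {ξ : m → ℝ} {x : n → ℝ} (hξ : ξ ⬝ᵥ (K * P⁻¹ * Kᵀ) *ᵥ ξ ≤ 1)
    (hx : x ⬝ᵥ P *ᵥ x ≤ 1) : ξ ⬝ᵥ K *ᵥ x ≤ 1 := by
  have hsq : (ξ ⬝ᵥ K *ᵥ x) ^ 2 ≤ 1 := (hP.sq_dotProduct_mulVec_le K ξ x).trans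
    (mul_le_one₀ hξ (by simpa using hP.posSemidef.dotProduct_mulVec_nonneg x) hx)
  exact (le_abs_self _).trans ((sq_le_one_iff_abs_le_one _).1 hsq)

end QuadraticForms

lemma dotProduct_self_nonneg {n : Type*} [Fintype n] (x : n → ℝ) : 0 ≤ x ⬝ᵥ x := by
  simpa using dotProduct_self_star_nonneg x

lemma sq_eNorm {k : ℕ} (x : Fin k → ℝ) : eNorm x ^ 2 = x ⬝ᵥ x :=
  Real.sq_sqrt (dotProduct_self_nonneg x)

section Rayleigh

variable {n : Type*} [Fintype n] [DecidableEq n] {P : Matrix n n ℝ}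

lemma Matrix.IsHermitian.exists_dotProduct_mulVec_eq_sum (hP : P.IsHermitian) (x : n → ℝ) :
    ∃ y : n → ℝ, x ⬝ᵥ P *ᵥ x = ∑ i, hP.eigenvalues i * y i ^ 2 ∧ x ⬝ᵥ x = ∑ i, y i ^ 2 := by
  set U : Matrix n n ℝ := (hP.eigenvectorUnitary : Matrix n n ℝ)
  have hUT : star U = Uᵀ := by ext; simp [star_apply]
  have hUU : U * Uᵀ = 1 := hUT ▸ Unitary.mul_star_self_of_mem hP.eigenvectorUnitary.2
  have hspec : P = (Uᵀ)ᵀ * diagonal hP.eigenvalues * Uᵀ := by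
    rw [transpose_transpose, ← hUT]
    simpa using hP.spectral_theorem
  refine ⟨Uᵀ *ᵥ x, ?_, ?_⟩
  · conv_lhs => rw [hspec, dotProduct_transpose_mul_mul_mulVec]
    simp only [mulVec_diagonal, dotProduct, sq]
    exact Finset.sum_congr rfl fun i _ => by ring
  · have hid : x ⬝ᵥ x = x ⬝ᵥ ((Uᵀ)ᵀ * 1 * Uᵀ) *ᵥ x := by
      rw [transpose_transpose, mul_one, hUU, one_mulVec]
    rw [hid, dotProduct_transpose_mul_mul_mulVec, one_mulVec]
    simp only [dotProduct, sq]

lemma Matrix.IsHermitian.dotProduct_mulVec_le_iSup_eigenvalues_mul (hP : P.IsHermitian)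
    (x : n → ℝ) : x ⬝ᵥ P *ᵥ x ≤ (⨆ i, hP.eigenvalues i) * (x ⬝ᵥ x) := by
  obtain ⟨y, hPx, hx⟩ := hP.exists_dotProduct_mulVec_eq_sum x
  rw [hPx, hx, Finset.mul_sum]
  exact Finset.sum_le_sum fun i _ =>
    mul_le_mul_of_nonneg_right (le_ciSup (Set.finite_range _).bddAbove i) (sq_nonneg _)

lemma Matrix.IsHermitian.iInf_eigenvalues_mul_le_dotProduct_mulVec (hP : P.IsHermitian)
    (x : n → ℝ) : (⨅ i, hP.eigenvalues i) * (x ⬝ᵥ x) ≤ x ⬝ᵥ P *ᵥ x := by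
  obtain ⟨y, hPx, hx⟩ := hP.exists_dotProduct_mulVec_eq_sum x
  rw [hPx, hx, Finset.mul_sum]
  exact Finset.sum_le_sum fun i _ =>
    mul_le_mul_of_nonneg_right (ciInf_le (Set.finite_range _).bddBelow i) (sq_nonneg _)

lemma Matrix.PosDef.iInf_eigenvalues_pos [Nonempty n] (hP : P.PosDef) :
    0 < ⨅ i, hP.1.eigenvalues i := by
  obtain ⟨i, hi⟩ := Finite.exists_min hP.1.eigenvalues
  exact (hP.eigenvalues_pos i).trans_le (le_ciInf hi)

end Rayleigh

lemma eNorm_le_of_dotProduct_mulVec_le {k : ℕ} {P : Matrix (Fin k) (Fin k) ℝ} (hP : P.PosDef)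
    {c : ℝ} (hc : 0 ≤ c) {x y : Fin k → ℝ} (h : y ⬝ᵥ P *ᵥ y ≤ c ^ 2 * (x ⬝ᵥ P *ᵥ x)) :
    eNorm y ≤ √((⨆ i, hP.1.eigenvalues i) / (⨅ i, hP.1.eigenvalues i)) * c * eNorm x := by
  rcases isEmpty_or_nonempty (Fin k) with hk | hk
  · simp [eNorm, dotProduct]
  set μmax := ⨆ i, hP.1.eigenvalues i
  set μmin := ⨅ i, hP.1.eigenvalues i
  have hyy : y ⬝ᵥ y ≤ μmax / μmin * c ^ 2 * (x ⬝ᵥ x) := by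
    rw [div_mul_eq_mul_div, div_mul_eq_mul_div, le_div_iff₀ hP.iInf_eigenvalues_pos]
    calc y ⬝ᵥ y * μmin = μmin * (y ⬝ᵥ y) := mul_comm _ _
      _ ≤ y ⬝ᵥ P *ᵥ y := hP.1.iInf_eigenvalues_mul_le_dotProduct_mulVec y
      _ ≤ c ^ 2 * (x ⬝ᵥ P *ᵥ x) := h
      _ ≤ c ^ 2 * (μmax * (x ⬝ᵥ x)) := by
        gcongr; exact hP.1.dotProduct_mulVec_le_iSup_eigenvalues_mul x
      _ = μmax * c ^ 2 * (x ⬝ᵥ x) := by ring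
  calc eNorm y ≤ √(μmax / μmin * c ^ 2 * (x ⬝ᵥ x)) := Real.sqrt_le_sqrt hyy
    _ = √(μmax / μmin) * c * eNorm x := by
      rw [Real.sqrt_mul' _ (dotProduct_self_nonneg x), Real.sqrt_mul' _ (sq_nonneg c),
        Real.sqrt_sq hc]
      rfl

lemma dotProduct_self_le_of_lipschitz {k l : ℕ} {φ : (Fin k → ℝ) → (Fin l → ℝ)} (hφ0 : φ 0 = 0)
    {L Lhat : ℝ} (hLLhat : L ≤ Lhat)
    (hφLip : ∀ q₁ q₂, eNorm (φ q₁ - φ q₂) ≤ L * eNorm (q₁ - q₂)) (q : Fin k → ℝ) :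
    φ q ⬝ᵥ φ q ≤ Lhat ^ 2 * (q ⬝ᵥ q) := by
  have hbound : eNorm (φ q) ≤ Lhat * eNorm q := by
    simpa [hφ0] using (hφLip q 0).trans (mul_le_mul_of_nonneg_right hLLhat (Real.sqrt_nonneg _))
  rw [← sq_eNorm, ← sq_eNorm, ← mul_pow]
  exact pow_le_pow_left₀ (Real.sqrt_nonneg _) hbound 2

section LinearMatrixInequality

variable {m n p : Type*} [Fintype m] [Fintype n] [Fintype p]

lemma sumElim_dotProduct_fromBlocks_lyapunov_mulVec_sumElim (A : Matrix m m ℝ) (G : Matrix m p ℝ)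
    (P : Matrix m m ℝ) (c : ℝ) (u : m → ℝ) (w : p → ℝ) :
    Sum.elim u w ⬝ᵥ
        fromBlocks (Aᵀ * P * A - c • P) (Aᵀ * P * G) (Gᵀ * P * A) (Gᵀ * P * G) *ᵥ Sum.elim u w
      = (A *ᵥ u + G *ᵥ w) ⬝ᵥ P *ᵥ (A *ᵥ u + G *ᵥ w) - c * (u ⬝ᵥ P *ᵥ u) := by
  simp only [sumElim_dotProduct_fromBlocks_mulVec_sumElim, sub_mulVec, dotProduct_sub,
    smul_mulVec, dotProduct_smul, smul_eq_mul, dotProduct_transpose_mul_mul_mulVec, mulVec_add,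
    dotProduct_add, add_dotProduct]
  ring

lemma sumElim_dotProduct_fromBlocks_multiplier_mulVec_sumElim [DecidableEq n] [DecidableEq p]
    (C : Matrix n m ℝ) (a b : ℝ) (u : m → ℝ) (w : p → ℝ) :
    Sum.elim u w ⬝ᵥ ((fromBlocks C 0 0 (1 : Matrix p p ℝ))ᵀ *
          fromBlocks (a • (1 : Matrix n n ℝ)) 0 0 (b • (1 : Matrix p p ℝ)) *
          fromBlocks C 0 0 (1 : Matrix p p ℝ)) *ᵥ Sum.elim u w
      = a * (C *ᵥ u ⬝ᵥ C *ᵥ u) + b * (w ⬝ᵥ w) := by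
  have hΓ : fromBlocks C 0 0 (1 : Matrix p p ℝ) *ᵥ Sum.elim u w = Sum.elim (C *ᵥ u) w := by
    simp [fromBlocks_mulVec]
  rw [dotProduct_transpose_mul_mul_mulVec, hΓ, sumElim_dotProduct_fromBlocks_mulVec_sumElim]
  simp only [smul_mulVec, one_mulVec, zero_mulVec, dotProduct_zero, dotProduct_smul, smul_eq_mul]
  ring

lemma dotProduct_mulVec_le_of_lmi [DecidableEq n] [DecidableEq p] {A P : Matrix m m ℝ}
    {G : Matrix m p ℝ} {C : Matrix n m ℝ} {c ν Lhat : ℝ} (hν : 0 < ν)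
    (hLMI : (-(fromBlocks (Aᵀ * P * A - c • P) (Aᵀ * P * G) (Gᵀ * P * A) (Gᵀ * P * G) +
        (fromBlocks C 0 0 (1 : Matrix p p ℝ))ᵀ *
          fromBlocks ((ν⁻¹ * Lhat ^ 2) • (1 : Matrix n n ℝ)) 0 0 ((-ν⁻¹) • (1 : Matrix p p ℝ)) *
          fromBlocks C 0 0 (1 : Matrix p p ℝ))).PosSemidef)
    {u : m → ℝ} {w : p → ℝ} (hw : w ⬝ᵥ w ≤ Lhat ^ 2 * (C *ᵥ u ⬝ᵥ C *ᵥ u)) :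
    (A *ᵥ u + G *ᵥ w) ⬝ᵥ P *ᵥ (A *ᵥ u + G *ᵥ w) ≤ c * (u ⬝ᵥ P *ᵥ u) := by
  have hform := hLMI.dotProduct_mulVec_nonneg (Sum.elim u w)
  rw [star_trivial, neg_mulVec, dotProduct_neg, add_mulVec, dotProduct_add,
    sumElim_dotProduct_fromBlocks_lyapunov_mulVec_sumElim,
    sumElim_dotProduct_fromBlocks_multiplier_mulVec_sumElim] at hform
  have hsector : 0 ≤ ν⁻¹ * (Lhat ^ 2 * (C *ᵥ u ⬝ᵥ C *ᵥ u) - w ⬝ᵥ w) :=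
    mul_nonneg (inv_nonneg.2 hν.le) (sub_nonneg.2 hw)
  linarith

end LinearMatrixInequality

theorem constrained_local_exponential_stability_general
    {nx nu nφ nq nc : ℕ}
    (A : Matrix (Fin nx) (Fin nx) ℝ) (B : Matrix (Fin nx) (Fin nu) ℝ)
    (G : Matrix (Fin nx) (Fin nφ) ℝ) (Cq : Matrix (Fin nq) (Fin nx) ℝ)
    (K₀ : Matrix (Fin nu) (Fin nx) ℝ)
    (φ : (Fin nq → ℝ) → (Fin nφ → ℝ)) (hφ0 : φ 0 = 0)
    (L Lhat : ℝ) (hLLhat : L ≤ Lhat)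
    (hφLip : ∀ q₁ q₂, eNorm (φ q₁ - φ q₂) ≤ L * eNorm (q₁ - q₂))
    (P : Matrix (Fin nx) (Fin nx) ℝ) (hP : P.PosDef)
    (α : ℝ) (hα : α ∈ Set.Ioo (0 : ℝ) 1) (ν : ℝ) (hν : 0 < ν)
    (hLMI :
      (-(Matrix.fromBlocks
          ((A + B * K₀)ᵀ * P * (A + B * K₀) - α ^ 2 • P)
          ((A + B * K₀)ᵀ * P * G)
          (Gᵀ * P * (A + B * K₀))
          (Gᵀ * P * G) +
        (Matrix.fromBlocks Cq 0 0 (1 : Matrix (Fin nφ) (Fin nφ) ℝ))ᵀ *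
          Matrix.fromBlocks ((ν⁻¹ * Lhat ^ 2) • (1 : Matrix (Fin nq) (Fin nq) ℝ)) 0 0
            ((-ν⁻¹) • (1 : Matrix (Fin nφ) (Fin nφ) ℝ)) *
          Matrix.fromBlocks Cq 0 0 (1 : Matrix (Fin nφ) (Fin nφ) ℝ))).PosSemidef)
    (ξ : Fin nc → (Fin nu → ℝ))
    (hξ : ∀ i, ξ i ⬝ᵥ (K₀ * P⁻¹ * K₀ᵀ).mulVec (ξ i) ≤ 1) :
    ∀ x : ℕ → (Fin nx → ℝ),
      x 0 ⬝ᵥ P.mulVec (x 0) ≤ 1 →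
      (∀ t, x (t + 1) = (A + B * K₀).mulVec (x t) + G.mulVec (φ (Cq.mulVec (x t)))) →
      (∀ t : ℕ, x t ⬝ᵥ P.mulVec (x t) ≤ 1) ∧
      (∀ t : ℕ, eNorm (x t) ≤
        Real.sqrt ((⨆ i, hP.1.eigenvalues i) / (⨅ i, hP.1.eigenvalues i)) *
          α ^ t * eNorm (x 0)) ∧
      (∀ (t : ℕ) (i : Fin nc), ξ i ⬝ᵥ K₀.mulVec (x t) ≤ 1) := by
  intro x hx0 hdyn
  have hdecay : ∀ t, x t ⬝ᵥ P *ᵥ x t ≤ (α ^ 2) ^ t * (x 0 ⬝ᵥ P *ᵥ x 0) := fun t =>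
    le_geom (u := fun t => x t ⬝ᵥ P *ᵥ x t) (sq_nonneg α) t fun k _ => by
      rw [hdyn k]
      exact dotProduct_mulVec_le_of_lmi hν hLMI
        (dotProduct_self_le_of_lipschitz hφ0 hLLhat hφLip _)
  have hinvariant : ∀ t, x t ⬝ᵥ P *ᵥ x t ≤ 1 := fun t =>
    (hdecay t).trans (mul_le_one₀ (pow_le_one₀ (sq_nonneg α) (pow_le_one₀ hα.1.le hα.2.le))
      (by simpa using hP.posSemidef.dotProduct_mulVec_nonneg (x 0)) hx0)
  refine ⟨hinvariant, fun t => ?_, fun t i => hP.dotProduct_mulVec_le_one K₀ (hξ i) (hinvariant t)⟩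
  exact eNorm_le_of_dotProduct_mulVec_le hP (pow_nonneg hα.1.le t)
    ((hdecay t).trans_eq (by rw [pow_right_comm]))

/-- **Theorem 7.** Fix `α ∈ (0,1)`, `ν > 0`, and `L̂ ≥ L > 0`. If `P ≻ 0` and
`K₀` satisfy `Ψ + Γᵀ M(L̂) Γ ⪯ 0` and `ξᵢᵀ K₀ P⁻¹ K₀ᵀ ξᵢ ≤ 1` for each
constraint vector `ξᵢ`, then for every initial state in `E_P = {x : xᵀPx ≤ 1}`
the closed-loop trajectory stays in `E_P`, satisfies the exponential bound
`‖x_t‖ ≤ √(λ_max(P)/λ_min(P)) αᵗ ‖x₀‖`, and the inputs `u_t = K₀x_t` satisfy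
`ξᵢᵀ u_t ≤ 1` for all `t` and `i`. -/
theorem constrained_local_exponential_stability
    {nx nu nφ nq nc : ℕ}
    (A : Matrix (Fin nx) (Fin nx) ℝ) (B : Matrix (Fin nx) (Fin nu) ℝ)
    (G : Matrix (Fin nx) (Fin nφ) ℝ) (Cq : Matrix (Fin nq) (Fin nx) ℝ)
    (K₀ : Matrix (Fin nu) (Fin nx) ℝ)
    (φ : (Fin nq → ℝ) → (Fin nφ → ℝ)) (hφ0 : φ 0 = 0)
    (L Lhat : ℝ) (hL : 0 < L) (hLLhat : L ≤ Lhat)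
    (hφLip : ∀ q₁ q₂, eNorm (φ q₁ - φ q₂) ≤ L * eNorm (q₁ - q₂))
    (P : Matrix (Fin nx) (Fin nx) ℝ) (hP : P.PosDef)
    (α : ℝ) (hα : α ∈ Set.Ioo (0 : ℝ) 1) (ν : ℝ) (hν : 0 < ν)
    (hLMI :
      (-(Matrix.fromBlocks
          ((A + B * K₀)ᵀ * P * (A + B * K₀) - α ^ 2 • P)
          ((A + B * K₀)ᵀ * P * G)
          (Gᵀ * P * (A + B * K₀))
          (Gᵀ * P * G) +
        (Matrix.fromBlocks Cq 0 0 (1 : Matrix (Fin nφ) (Fin nφ) ℝ))ᵀ *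
          Matrix.fromBlocks ((ν⁻¹ * Lhat ^ 2) • (1 : Matrix (Fin nq) (Fin nq) ℝ)) 0 0
            ((-ν⁻¹) • (1 : Matrix (Fin nφ) (Fin nφ) ℝ)) *
          Matrix.fromBlocks Cq 0 0 (1 : Matrix (Fin nφ) (Fin nφ) ℝ))).PosSemidef)
    (ξ : Fin nc → (Fin nu → ℝ))
    (hξ : ∀ i, ξ i ⬝ᵥ (K₀ * P⁻¹ * K₀ᵀ).mulVec (ξ i) ≤ 1) :
    ∀ x : ℕ → (Fin nx → ℝ),
      x 0 ⬝ᵥ P.mulVec (x 0) ≤ 1 →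
      (∀ t, x (t + 1) = (A + B * K₀).mulVec (x t) + G.mulVec (φ (Cq.mulVec (x t)))) →
      (∀ t : ℕ, x t ⬝ᵥ P.mulVec (x t) ≤ 1) ∧
      (∀ t : ℕ, eNorm (x t) ≤
        Real.sqrt ((⨆ i, hP.1.eigenvalues i) / (⨅ i, hP.1.eigenvalues i)) *
          α ^ t * eNorm (x 0)) ∧
      (∀ (t : ℕ) (i : Fin nc), ξ i ⬝ᵥ K₀.mulVec (x t) ≤ 1) :=
  constrained_local_exponential_stability_general A B G Cq K₀ φ hφ0 L Lhat hLLhat hφLip P hP α hα ν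
    hν hLMI ξ hξ
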